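/- arXiv:2104.08798 — 3 statements merged into one kernel-verified Lean document; each statement's English description precedes it below -/
import Mathlib

section
/- Let a₁,a₂,a₃ be odd positive integers and A = diag(a₁,a₂,a₃). Suppose Y ∈ M₃(ℤ/8ℤ) satisfies YᵀAY ≡ A (mod 8) and det Y ≡ 1 (mod 8). Then the reduction of Y modulo 2 is a permutation matrix E_s for some permutation s ∈ S₃, and moreover a_{s(i)} ≡ a_i (mod 4) for each i = 1,2,3. -/
open Matrix in
set_option maxHeartbeats 4000000 in
set_option maxRecDepth 10000 in
lemma aux_perm : ∀ M : Matrix (Fin 3) (Fin 3) (ZMod 2),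
    M.transpose * M = 1 → ∃ s : Equiv.Perm (Fin 3),
      M = Matrix.of (fun i j => if j = s i then (1:ZMod 2) else 0) := by
  decide

lemma aux_compat : ∀ x : ZMod 8,
    ZMod.castHom (by norm_num : (2:ℕ) ∣ 4) (ZMod 2)
      (ZMod.castHom (by norm_num : (4:ℕ) ∣ 8) (ZMod 4) x) =
    ZMod.castHom (by norm_num : (2:ℕ) ∣ 8) (ZMod 2) x := by decide

lemma aux_sq1 : ∀ y : ZMod 4,
    ZMod.castHom (by norm_num : (2:ℕ) ∣ 4) (ZMod 2) y = 1 → y * y = 1 := by decide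

lemma aux_sq0 : ∀ y : ZMod 4,
    ZMod.castHom (by norm_num : (2:ℕ) ∣ 4) (ZMod 2) y = 0 → y * y = 0 := by decide

theorem stmt_4 (a : Fin 3 → ℕ) (hodd : ∀ i, Odd (a i)) (hpos : ∀ i, 0 < a i)
    (Y : Matrix (Fin 3) (Fin 3) (ZMod 8))
    (hY : Y.transpose * Matrix.diagonal (fun i => (a i : ZMod 8)) * Y =
      Matrix.diagonal (fun i => (a i : ZMod 8)))
    (hdet : Y.det = 1) :
    ∃ s : Equiv.Perm (Fin 3),
      Y.map (ZMod.castHom (by norm_num : (2:ℕ) ∣ 8) (ZMod 2)) =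
        Matrix.of (fun i j => if j = s i then (1 : ZMod 2) else 0) ∧
      ∀ i, a (s i) % 4 = a i % 4 := by
  have φ2 : ZMod 8 →+* ZMod 2 := ZMod.castHom (by norm_num : (2:ℕ) ∣ 8) (ZMod 2)
  -- mod 2 statement
  have hmod2 : ∀ n : ℕ, Odd n → ((n : ZMod 2)) = 1 := by
    intro n hn
    rw [← ZMod.natCast_mod n 2, Nat.odd_iff.mp hn, Nat.cast_one]
  have h2 : (Y.map (ZMod.castHom (by norm_num : (2:ℕ) ∣ 8) (ZMod 2))).transpose *
      (Y.map (ZMod.castHom (by norm_num : (2:ℕ) ∣ 8) (ZMod 2))) = 1 := by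
    have := congrArg ((ZMod.castHom (by norm_num : (2:ℕ) ∣ 8) (ZMod 2)).mapMatrix) hY
    simp only [RingHom.mapMatrix_apply, Matrix.map_mul] at this
    rw [Matrix.transpose_map] at this
    have hD : (Matrix.diagonal (fun i => ((a i : ℕ) : ZMod 8))).map
        (ZMod.castHom (by norm_num : (2:ℕ) ∣ 8) (ZMod 2)) = 1 := by
      rw [Matrix.diagonal_map (map_zero _)]
      have : (fun i => (ZMod.castHom (by norm_num : (2:ℕ) ∣ 8) (ZMod 2)) ((a i : ZMod 8)))
          = fun _ => (1 : ZMod 2) := by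
        funext i
        rw [map_natCast, hmod2 _ (hodd i)]
      rw [this, Matrix.diagonal_one]
    rw [hD, Matrix.mul_one] at this
    exact this
  obtain ⟨s, hs⟩ := aux_perm _ h2
  refine ⟨s, hs, ?_⟩
  -- mod 4 statement
  have h4 := congrArg ((ZMod.castHom (by norm_num : (4:ℕ) ∣ 8) (ZMod 4)).mapMatrix) hY
  simp only [RingHom.mapMatrix_apply, Matrix.map_mul] at h4
  rw [Matrix.transpose_map] at h4
  rw [Matrix.diagonal_map (map_zero _)] at h4
  set B : Matrix (Fin 3) (Fin 3) (ZMod 4) :=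
    Y.map (ZMod.castHom (by norm_num : (4:ℕ) ∣ 8) (ZMod 4)) with hB
  -- entries of B mod 2
  have hBent : ∀ k i : Fin 3,
      ZMod.castHom (by norm_num : (2:ℕ) ∣ 4) (ZMod 2) (B k i)
        = if i = s k then 1 else 0 := by
    intro k i
    rw [hB, Matrix.map_apply, aux_compat]
    have := congrFun (congrFun hs k) i
    rw [Matrix.map_apply] at this
    exact this
  have hdiag : ∀ i : Fin 3, ((a (s.symm i) : ZMod 4)) = ((a i : ZMod 4)) := by
    intro i
    have hii := congrFun (congrFun h4 i) i
    rw [Matrix.mul_apply] at hii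
    simp only [Matrix.mul_diagonal, Matrix.transpose_apply, Matrix.diagonal_apply_eq,
      map_natCast] at hii
    have hterm : ∀ j : Fin 3, B j i * ((a j : ZMod 4)) * B j i
        = if s.symm i = j then ((a j : ZMod 4)) else 0 := by
      intro j
      by_cases h : i = s j
      · have h1 : B j i * B j i = 1 := by
          apply aux_sq1
          rw [hBent j i, if_pos h]
        rw [if_pos (s.symm_apply_eq.mpr h)]
        calc B j i * ((a j : ZMod 4)) * B j i = ((a j : ZMod 4)) * (B j i * B j i) := by ring
          _ = ((a j : ZMod 4)) := by rw [h1, mul_one]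
      · have h0 : B j i * B j i = 0 := by
          apply aux_sq0
          rw [hBent j i, if_neg h]
        rw [if_neg (fun hc => h (s.symm_apply_eq.mp hc))]
        calc B j i * ((a j : ZMod 4)) * B j i = ((a j : ZMod 4)) * (B j i * B j i) := by ring
          _ = 0 := by rw [h0, mul_zero]
    rw [Finset.sum_congr rfl (fun j _ => hterm j), Finset.sum_ite_eq,
      if_pos (Finset.mem_univ _)] at hii
    exact hii
  intro i
  have := hdiag (s i)
  rw [Equiv.symm_apply_apply] at this
  exact ((ZMod.natCast_eq_natCast_iff _ _ _).mp this).symm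
end

section
/- Let a₁,a₂,a₃ be odd integers and Y = (y_{ij}) ∈ M₃(ℤ) with ∑ᵢ aᵢ y_{ij}² ≡ a_j (mod 8) for each j, and ∑ᵢ aᵢ y_{ij} y_{ik} ≡ 0 (mod 8) for each j ≠ k. Then in each column j, exactly one of y_{1j}, y_{2j}, y_{3j} is odd. -/
theorem stmt_5 (a : Fin 3 → ℤ) (hodd : ∀ i, Odd (a i))
    (Y : Matrix (Fin 3) (Fin 3) ℤ)
    (h1 : ∀ j, (∑ i, a i * Y i j ^ 2) ≡ a j [ZMOD 8])
    (h2 : ∀ j k, j ≠ k → (∑ i, a i * Y i j * Y i k) ≡ 0 [ZMOD 8]) :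
    ∀ j, ∃! i, Odd (Y i j) := by
  have hcast : ∀ y : ℤ, Odd y ↔ ((y : ZMod 2) = 1) := by
    intro y
    rw [show (1 : ZMod 2) = ((1:ℤ) : ZMod 2) by norm_num, ZMod.intCast_eq_intCast_iff']
    constructor
    · intro h
      have := Int.odd_iff.mp h
      simpa [Int.ModEq] using this
    · intro h
      exact Int.odd_iff.mpr (by simpa [Int.ModEq] using h)
  have ha : ∀ i, ((a i : ZMod 2) = 1) := fun i => (hcast (a i)).mp (hodd i)
  have hsq : ∀ x : ZMod 2, x ^ 2 = x := by decide
  -- Column sums of parities are 1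
  have key : ∀ j, ((Y 0 j : ZMod 2) + (Y 1 j : ZMod 2) + (Y 2 j : ZMod 2)) = 1 := by
    intro j
    have h := (h1 j).of_dvd (by norm_num : (2:ℤ) ∣ 8)
    have h' : ((∑ i, a i * Y i j ^ 2 : ℤ) : ZMod 2) = ((a j : ℤ) : ZMod 2) :=
      (ZMod.intCast_eq_intCast_iff' _ _ _).mpr h
    rw [Fin.sum_univ_three] at h'
    push_cast at h'
    rw [ha 0, ha 1, ha 2, ha j, hsq, hsq, hsq] at h'
    simpa using h'
  intro j
  -- not all three entries in column j are odd
  have hnotall : ¬ ((Y 0 j : ZMod 2) = 1 ∧ (Y 1 j : ZMod 2) = 1 ∧ (Y 2 j : ZMod 2) = 1) := by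
    rintro ⟨e0, e1, e2⟩
    obtain ⟨k, hk⟩ : ∃ k : Fin 3, j ≠ k := by
      fin_cases j
      · exact ⟨1, by decide⟩
      · exact ⟨0, by decide⟩
      · exact ⟨0, by decide⟩
    have h := (h2 j k hk).of_dvd (by norm_num : (2:ℤ) ∣ 8)
    have h' : ((∑ i, a i * Y i j * Y i k : ℤ) : ZMod 2) = ((0 : ℤ) : ZMod 2) :=
      (ZMod.intCast_eq_intCast_iff' _ _ _).mpr h
    rw [Fin.sum_univ_three] at h'
    push_cast at h'
    rw [ha 0, ha 1, ha 2, e0, e1, e2] at h'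
    simp at h'
    rw [key k] at h'
    exact one_ne_zero h'
  have htwo : ∀ x : ZMod 2, x = 0 ∨ x = 1 := by decide
  have hk := key j
  rcases htwo (Y 0 j : ZMod 2) with e0 | e0 <;>
  rcases htwo (Y 1 j : ZMod 2) with e1 | e1 <;>
  rcases htwo (Y 2 j : ZMod 2) with e2 | e2 <;>
    rw [e0, e1, e2] at hk <;>
    first
      | (exfalso; revert hk; decide)
      | (exfalso; exact hnotall ⟨e0, e1, e2⟩)
      | (refine ⟨0, (hcast _).mpr e0, ?_⟩
         intro i hi
         fin_cases i <;> simp_all [hcast])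
      | (refine ⟨1, (hcast _).mpr e1, ?_⟩
         intro i hi
         fin_cases i <;> simp_all [hcast])
      | (refine ⟨2, (hcast _).mpr e2, ?_⟩
         intro i hi
         fin_cases i <;> simp_all [hcast])
end

section
/- Let a, b be positive integers with a ≡ b (mod 4) and both odd. In ℚ₂³ with quadratic form Q(x,y,z) = a x² + a y² + b z², the product of symmetries σ = τ_{e₂+e₃} τ_{e₁+e₃} is well defined (both vectors are anisotropic since Q(e₂+e₃) = Q(e₁+e₃) = a+b ≠ 0), maps the lattice ℤ₂³ to itself, and satisfies σ(e₃) ≡ e₁ (mod 2ℤ₂³). -/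
/-!
Write `a = u - 2k`, `b = u + 2k` with `u = (a + b)/2` odd. Since `Q(eᵢ + e₃) = a + b = 2u`, the
reflection in `eᵢ + e₃` (`i = 1, 2`) is `w ↦ w - ((a wᵢ + b w₃)/u) (eᵢ + e₃)`, and `u` is a
`2`-adic unit, so both reflections preserve `ℤ₂³`. Putting `t = k/u ∈ ℤ₂`, a direct computation
gives `σ(e₃) = (-1 - 2t, 2t + 4t², 4t²) ≡ e₁ (mod 2)`. In the code `eᵢ` is `Pi.single (i - 1) 1`.
-/

lemma Int.exists_odd_eq_sub_add_of_modEq_four {a b : ℤ} (ha : Odd a) (hab : a ≡ b [ZMOD 4]) :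
    ∃ u k : ℤ, Odd u ∧ a = u - 2 * k ∧ b = u + 2 * k := by
  obtain ⟨k, hk⟩ := hab.dvd
  obtain ⟨m, hm⟩ := ha
  exact ⟨a + 2 * k, k, ⟨m + k, by omega⟩, by ring, by omega⟩

lemma Padic.norm_intCast_eq_one_of_odd {u : ℤ} (hu : Odd u) : ‖(u : ℚ_[2])‖ = 1 := by
  refine le_antisymm (Padic.norm_int_le_one u) (not_lt.mp fun h => ?_)
  rw [Padic.norm_intCast_lt_one_iff] at h
  exact Int.not_even_iff_odd.mpr hu (even_iff_two_dvd.mpr (by exact_mod_cast h))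

lemma Padic.norm_sub_smul_apply_le_one {p : ℕ} [Fact p.Prime] {ι : Type*} {w v : ι → ℚ_[p]}
    {c : ℚ_[p]} (hw : ∀ i, ‖w i‖ ≤ 1) (hc : ‖c‖ ≤ 1) (hv : ∀ i, ‖v i‖ ≤ 1) (i : ι) :
    ‖(w - c • v) i‖ ≤ 1 :=
  (PadicInt.subring p).sub_mem (hw i) ((PadicInt.subring p).mul_mem hc (hv i))

section Ternary

variable {K : Type*} [Field K] (a b : K)

def aabForm (v : Fin 3 → K) : K := a * v 0 ^ 2 + a * v 1 ^ 2 + b * v 2 ^ 2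

def aabPolar (v w : Fin 3 → K) : K := a * (v 0 * w 0) + a * (v 1 * w 1) + b * (v 2 * w 2)

def aabReflection (v w : Fin 3 → K) : Fin 3 → K := w - (2 * aabPolar a b v w / aabForm a b v) • v

variable {a b}

lemma aabForm_single_add_single_two {i : Fin 3} (hi : i ≠ 2) :
    aabForm a b (Pi.single i 1 + Pi.single 2 1) = a + b := by
  fin_cases i <;> simp_all [aabForm]

lemma aabReflection_single_add_single_two {i : Fin 3} (hi : i ≠ 2) (w : Fin 3 → K) :
    aabReflection a b (Pi.single i 1 + Pi.single 2 1) w =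
      w - (2 * (a * w i + b * w 2) / (a + b)) • (Pi.single i 1 + Pi.single 2 1) := by
  rw [aabReflection, aabForm_single_add_single_two hi]
  fin_cases i <;> simp_all [aabPolar]

lemma aabReflection_aabReflection_single_two {u k : K} (hu : 2 * u ≠ 0) (ha : a = u - 2 * k)
    (hb : b = u + 2 * k) :
    aabReflection a b (Pi.single 1 1 + Pi.single 2 1)
        (aabReflection a b (Pi.single 0 1 + Pi.single 2 1) (Pi.single 2 1)) =
      Pi.single 0 1 + (2 : K) • ![-1 - k / u, k / u + 2 * (k / u) ^ 2, 2 * (k / u) ^ 2] := by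
  have hsum : a + b = 2 * u := by rw [ha, hb]; ring
  have h2 : (2 : K) ≠ 0 := left_ne_zero_of_mul hu
  have hu' : u ≠ 0 := right_ne_zero_of_mul hu
  rw [aabReflection_single_add_single_two (by decide)]
  rw [aabReflection_single_add_single_two (by decide), hsum]
  funext j
  fin_cases j <;> simp [hb] <;> field_simp <;> ring

end Ternary

lemma Padic.norm_aabReflection_apply_le_one {a b u : ℤ} (hu : Odd u) (hab : a + b = 2 * u)
    {i : Fin 3} (hi : i ≠ 2) {w : Fin 3 → ℚ_[2]} (hw : ∀ j, ‖w j‖ ≤ 1) (j : Fin 3) :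
    ‖aabReflection (a : ℚ_[2]) b (Pi.single i 1 + Pi.single 2 1) w j‖ ≤ 1 := by
  have hsum : (a : ℚ_[2]) + b = 2 * u := by exact_mod_cast hab
  rw [aabReflection_single_add_single_two hi, hsum, mul_div_mul_left _ _ two_ne_zero]
  refine Padic.norm_sub_smul_apply_le_one hw ?_ ?_ j
  · rw [norm_div, norm_intCast_eq_one_of_odd hu, div_one]
    exact (PadicInt.subring 2).add_mem
      ((PadicInt.subring 2).mul_mem (norm_int_le_one a) (hw i))
      ((PadicInt.subring 2).mul_mem (norm_int_le_one b) (hw 2))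
  · intro j
    fin_cases i <;> fin_cases j <;> simp_all

theorem stmt_9_general (a b : ℤ)
    (haodd : Odd a) (hab : a ≡ b [ZMOD 4]) :
    letI Q : (Fin 3 → ℚ_[2]) → ℚ_[2] :=
      fun v => (a : ℚ_[2]) * v 0 ^ 2 + (a : ℚ_[2]) * v 1 ^ 2 + (b : ℚ_[2]) * v 2 ^ 2
    letI B : (Fin 3 → ℚ_[2]) → (Fin 3 → ℚ_[2]) → ℚ_[2] :=
      fun v w => (a : ℚ_[2]) * (v 0 * w 0) + (a : ℚ_[2]) * (v 1 * w 1) +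
        (b : ℚ_[2]) * (v 2 * w 2)
    letI τ : (Fin 3 → ℚ_[2]) → (Fin 3 → ℚ_[2]) → (Fin 3 → ℚ_[2]) :=
      fun v w => w - (2 * B v w / Q v) • v
    letI e : Fin 3 → (Fin 3 → ℚ_[2]) := fun i => Pi.single i 1
    letI σ : (Fin 3 → ℚ_[2]) → (Fin 3 → ℚ_[2]) :=
      fun w => τ (e 1 + e 2) (τ (e 0 + e 2) w)
    Q (e 1 + e 2) ≠ 0 ∧ Q (e 0 + e 2) ≠ 0 ∧
    (∀ v : Fin 3 → ℚ_[2], (∀ i, ‖v i‖ ≤ 1) → ∀ i, ‖σ v i‖ ≤ 1) ∧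
    (∃ w : Fin 3 → ℚ_[2], (∀ i, ‖w i‖ ≤ 1) ∧ σ (e 2) = e 0 + (2 : ℚ_[2]) • w) := by
  obtain ⟨u, k, hu, ha, hb⟩ := Int.exists_odd_eq_sub_add_of_modEq_four haodd hab
  have hsum : a + b = 2 * u := by omega
  have hu_norm := Padic.norm_intCast_eq_one_of_odd hu
  have h2u : (2 : ℚ_[2]) * u ≠ 0 :=
    mul_ne_zero two_ne_zero (norm_ne_zero_iff.mp (hu_norm ▸ one_ne_zero))
  let e₀₂ : Fin 3 → ℚ_[2] := Pi.single 0 1 + Pi.single 2 1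
  let e₁₂ : Fin 3 → ℚ_[2] := Pi.single 1 1 + Pi.single 2 1
  show aabForm (a : ℚ_[2]) b e₁₂ ≠ 0 ∧ aabForm (a : ℚ_[2]) b e₀₂ ≠ 0 ∧
    (∀ v, (∀ i, ‖v i‖ ≤ 1) →
      ∀ i, ‖aabReflection (a : ℚ_[2]) b e₁₂ (aabReflection a b e₀₂ v) i‖ ≤ 1) ∧
    ∃ w, (∀ i, ‖w i‖ ≤ 1) ∧
      aabReflection (a : ℚ_[2]) b e₁₂ (aabReflection a b e₀₂ (Pi.single 2 1)) =
        Pi.single 0 1 + (2 : ℚ_[2]) • w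
  rw [aabForm_single_add_single_two (by decide), aabForm_single_add_single_two (by decide)]
  rw [show (a : ℚ_[2]) + b = 2 * u by exact_mod_cast hsum]
  obtain ⟨t, ht⟩ : ∃ t : ℤ_[2], (t : ℚ_[2]) = k / u :=
    ⟨⟨k / u, by rw [norm_div, hu_norm, div_one]; exact Padic.norm_int_le_one k⟩, rfl⟩
  refine ⟨h2u, h2u, fun v hv => Padic.norm_aabReflection_apply_le_one hu hsum (by decide)
    (Padic.norm_aabReflection_apply_le_one hu hsum (by decide) hv), _, ?_,
    aabReflection_aabReflection_single_two (k := (k : ℚ_[2])) h2u (by push_cast [ha]; ring)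
      (by push_cast [hb]; ring)⟩
  rw [← ht]
  intro i
  fin_cases i
  · exact_mod_cast (-1 - t).norm_le_one
  · exact_mod_cast (t + 2 * t ^ 2).norm_le_one
  · exact_mod_cast (2 * t ^ 2).norm_le_one

theorem stmt_9 (a b : ℤ) (hapos : 0 < a) (hbpos : 0 < b)
    (haodd : Odd a) (hbodd : Odd b) (hab : a ≡ b [ZMOD 4]) :
    letI Q : (Fin 3 → ℚ_[2]) → ℚ_[2] :=
      fun v => (a : ℚ_[2]) * v 0 ^ 2 + (a : ℚ_[2]) * v 1 ^ 2 + (b : ℚ_[2]) * v 2 ^ 2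
    letI B : (Fin 3 → ℚ_[2]) → (Fin 3 → ℚ_[2]) → ℚ_[2] :=
      fun v w => (a : ℚ_[2]) * (v 0 * w 0) + (a : ℚ_[2]) * (v 1 * w 1) +
        (b : ℚ_[2]) * (v 2 * w 2)
    letI τ : (Fin 3 → ℚ_[2]) → (Fin 3 → ℚ_[2]) → (Fin 3 → ℚ_[2]) :=
      fun v w => w - (2 * B v w / Q v) • v
    letI e : Fin 3 → (Fin 3 → ℚ_[2]) := fun i => Pi.single i 1
    letI σ : (Fin 3 → ℚ_[2]) → (Fin 3 → ℚ_[2]) :=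
      fun w => τ (e 1 + e 2) (τ (e 0 + e 2) w)
    Q (e 1 + e 2) ≠ 0 ∧ Q (e 0 + e 2) ≠ 0 ∧
    (∀ v : Fin 3 → ℚ_[2], (∀ i, ‖v i‖ ≤ 1) → ∀ i, ‖σ v i‖ ≤ 1) ∧
    (∃ w : Fin 3 → ℚ_[2], (∀ i, ‖w i‖ ≤ 1) ∧ σ (e 2) = e 0 + (2 : ℚ_[2]) • w) :=
  stmt_9_general a b haodd hab
end
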